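/- arXiv:1204.0815 — 2 statements merged into one kernel-verified Lean document; each statement's English description precedes it below -/
import Mathlib

section
/- Let 0 < a < b and let f be analytic on the annulus A_{a,b} = {z ∈ ℂ : a < |z| < b} with sup_{a<r<b} M₂(f;r) < ∞, i.e. f belongs to the Hardy space H²(A_{a,b}). Then f decomposes as f = g + h on A_{a,b}, where g is analytic on the disc D_b = {|z| < b} with sup_{0<r<b} M₂(g;r) < ∞ (g ∈ H²(D_b)) and h is analytic on {z ∈ ℂ : |z| > a} with sup_{r>a} M₂(h;r) < ∞ (h ∈ H² of the exterior domain ℂ \ closure(D_a)). -/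
/-!
The Laurent coefficients `c n`, the averages of `w ^ (-n) * f w` over the circle `‖w‖ = ρ`, do not
depend on `ρ ∈ (a, b)` by Cauchy's theorem on the annulus, and Parseval's identity on that circle
gives `∑ ‖c n‖² ρ^(2n) = M₂(f;ρ)² ≤ C`. In particular `‖c n‖ ρ^n ≤ √C`, so `g = ∑_{n ≥ 0} c n z^n`
converges for `‖z‖ < b` and `h = ∑_{n < 0} c n z^n` for `‖z‖ > a`. Parseval for these absolutely
convergent series bounds `M₂(g;r)²` by the `ρ`-sum with `r ≤ ρ ∈ (a, b)`, and `M₂(h;r)²` by the one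
with `a < ρ ≤ r`. Finally `f - g` and `h` have the same Fourier coefficients on every circle in the
annulus, so Parseval applied to their difference shows that they coincide there.
-/

open MeasureTheory Complex Filter Set

noncomputable section

/-- The annulus `A_{a,b} = {z : ℂ | a < |z| < b}`. -/
def cAnnulus (a b : ℝ) : Set ℂ := {z : ℂ | a < ‖z‖ ∧ ‖z‖ < b}

/-- The point `r·e^{iφ}` on the circle of radius `r`. -/
def circ (r φ : ℝ) : ℂ := (r : ℂ) * Complex.exp (φ * Complex.I)

/-- The squared mean `M₂(f;r)² = (1/2π) ∫₀^{2π} |f(re^{iφ})|² dφ`. -/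
def M2sq (f : ℂ → ℂ) (r : ℝ) : ℝ :=
  (1 / (2 * Real.pi)) * ∫ φ in (0:ℝ)..(2 * Real.pi), ‖f (circ r φ)‖ ^ 2

/-- Membership in the Hardy space `H²(A_{a,b})` of the annulus: `f` is analytic on the
annulus and `sup_{a<r<b} M₂(f;r) < ∞`. -/
def MemH2 (a b : ℝ) (f : ℂ → ℂ) : Prop :=
  AnalyticOnNhd ℂ f (cAnnulus a b) ∧ ∃ C : ℝ, ∀ r ∈ Set.Ioo a b, M2sq f r ≤ C

open Metric Real FormalMultilinearSeries

lemma circ_eq_circleMap (r φ : ℝ) : circ r φ = circleMap 0 r φ := by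
  simp [circ, circleMap_zero]

/-- The `n`-th Laurent coefficient `(2πi)⁻¹ ∮_{‖w‖ = r} w ^ (-n - 1) F w dw`, written as a circle
average. -/
def laurentCoeff (F : ℂ → ℂ) (r : ℝ) (n : ℤ) : ℂ :=
  circleAverage (fun w => w ^ (-n) * F w) 0 r

lemma ne_zero_of_mem_sphere_zero {r : ℝ} (hr : 0 < r) {w : ℂ} (hw : w ∈ sphere 0 r) : w ≠ 0 :=
  norm_ne_zero_iff.mp (by rw [mem_sphere_zero_iff_norm.mp hw]; exact hr.ne')

lemma circleAverage_zpow {r : ℝ} (hr : 0 < r) (k : ℤ) :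
    circleAverage (fun w : ℂ => w ^ k) 0 r = if k = 0 then 1 else 0 := by
  split_ifs with hk
  · simp [hk, circleAverage_const]
  rw [circleAverage_eq_circleIntegral hr.ne', circleIntegral.integral_congr hr.le
    (g := fun w => (w - 0) ^ (k - 1)), circleIntegral.integral_sub_zpow_of_ne (by omega), smul_zero]
  intro w hw
  simp [zpow_sub_one₀ (ne_zero_of_mem_sphere_zero hr hw), mul_comm]

lemma fourierCoeffOn_circleMap (F : ℂ → ℂ) {r : ℝ} (hr : r ≠ 0) (n : ℤ) :
    fourierCoeffOn two_pi_pos (fun θ => F (circleMap 0 r θ)) n = laurentCoeff F r n * r ^ n := by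
  rw [fourierCoeffOn_eq_integral, laurentCoeff, circleAverage_def]
  simp only [fourier_coe_apply, sub_zero, circleMap_zero_zpow]
  have hintegrand : ∀ θ : ℝ, circleMap 0 (r ^ (-n)) (↑(-n) * θ) * F (circleMap 0 r θ) =
      (r : ℂ) ^ (-n) * (cexp (2 * π * I * ↑(-n) * θ / ↑(2 * π)) • F (circleMap 0 r θ)) := by
    intro θ
    have hπ : (π : ℂ) ≠ 0 := by exact_mod_cast pi_ne_zero
    rw [circleMap_zero, smul_eq_mul]
    push_cast
    field_simp
  simp_rw [hintegrand, intervalIntegral.integral_const_mul]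
  generalize (∫ x in (0 : ℝ)..2 * π, (_ : ℂ)) = J
  have hr' : (r : ℂ) ≠ 0 := by exact_mod_cast hr
  simp only [Complex.real_smul, zpow_neg]
  field_simp

theorem hasSum_sq_laurentCoeff {F : ℂ → ℂ} {r : ℝ} (hr : 0 < r)
    (hF : ContinuousOn F (sphere 0 r)) :
    HasSum (fun n => (‖laurentCoeff F r n‖ * r ^ n) ^ 2) (M2sq F r) := by
  have hc : Continuous fun θ => F (circleMap 0 r θ) :=
    hF.comp_continuous (continuous_circleMap 0 r) (circleMap_mem_sphere 0 hr.le)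
  obtain ⟨K, hK⟩ := (isCompact_sphere (0 : ℂ) r).exists_bound_of_continuousOn hF
  have hL2 : MemLp (fun θ => F (circleMap 0 r θ)) 2 (volume.restrict (Ioc 0 (2 * π))) :=
    .of_bound hc.aestronglyMeasurable K
      (ae_of_all _ fun θ => hK _ (circleMap_mem_sphere 0 hr.le θ))
  convert hasSum_sq_fourierCoeffOn two_pi_pos hL2 using 1
  · ext n
    rw [fourierCoeffOn_circleMap F hr.ne', norm_mul, norm_zpow, Complex.norm_real,
      Real.norm_of_nonneg hr.le]
  · simp [M2sq, circ_eq_circleMap]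

theorem eqOn_zero_of_M2sq_eq_zero {F : ℂ → ℂ} {r : ℝ} (hr : 0 < r)
    (hF : ContinuousOn F (sphere 0 r)) (h : M2sq F r = 0) : EqOn F 0 (sphere 0 r) := by
  intro z hz
  by_contra hFz
  obtain ⟨θ, hθ, rfl⟩ : z ∈ circleMap 0 r '' Ioc 0 (2 * π) := by
    rwa [image_circleMap_Ioc, abs_of_pos hr]
  have hc : Continuous fun θ => ‖F (circleMap 0 r θ)‖ ^ 2 :=
    (hF.comp_continuous (continuous_circleMap 0 r) (circleMap_mem_sphere 0 hr.le)).norm.pow 2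
  have hpos := intervalIntegral.integral_pos two_pi_pos hc.continuousOn
    (fun _ _ => by positivity) ⟨θ, Ioc_subset_Icc_self hθ, by positivity⟩
  simp only [M2sq, circ_eq_circleMap] at h
  exact hpos.ne' ((mul_eq_zero.mp h).resolve_left (by positivity))

lemma continuousOn_zpow_mul {F : ℂ → ℂ} {r : ℝ} (hr : 0 < r) (hF : ContinuousOn F (sphere 0 r))
    (k : ℤ) : ContinuousOn (fun w => w ^ k * F w) (sphere 0 r) :=
  (continuousOn_id.zpow₀ k fun _ hw => .inl (ne_zero_of_mem_sphere_zero hr hw)).mul hF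

lemma laurentCoeff_sub {F G : ℂ → ℂ} {r : ℝ} (hr : 0 < r) (hF : ContinuousOn F (sphere 0 r))
    (hG : ContinuousOn G (sphere 0 r)) (n : ℤ) :
    laurentCoeff (F - G) r n = laurentCoeff F r n - laurentCoeff G r n := by
  simp only [laurentCoeff, Pi.sub_apply, mul_sub]
  exact circleAverage_fun_sub ((continuousOn_zpow_mul hr hF _).circleIntegrable hr.le)
    ((continuousOn_zpow_mul hr hG _).circleIntegrable hr.le)

theorem eqOn_of_laurentCoeff_eq {F G : ℂ → ℂ} {r : ℝ} (hr : 0 < r)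
    (hF : ContinuousOn F (sphere 0 r)) (hG : ContinuousOn G (sphere 0 r))
    (h : laurentCoeff F r = laurentCoeff G r) : EqOn F G (sphere 0 r) := by
  have hsum := hasSum_sq_laurentCoeff hr (hF.sub hG)
  simp only [laurentCoeff_sub hr hF hG, h, sub_self, norm_zero, zero_mul, zero_pow two_ne_zero]
    at hsum
  intro z hz
  exact sub_eq_zero.mp (eqOn_zero_of_M2sq_eq_zero hr (hF.sub hG) (hsum.unique hasSum_zero) hz)

lemma circleAverage_mul_zpow {r : ℝ} (hr : 0 < r) (c : ℂ) (m n : ℤ) :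
    circleAverage (fun w : ℂ => w ^ (-m) * (c * w ^ n)) 0 r = if n = m then c else 0 := by
  have hsphere : EqOn (fun w : ℂ => w ^ (-m) * (c * w ^ n)) (fun w => c • w ^ (n - m))
      (sphere 0 |r|) := fun w hw => by
    rw [abs_of_pos hr] at hw
    simp only [smul_eq_mul, zpow_sub₀ (ne_zero_of_mem_sphere_zero hr hw), zpow_neg, div_eq_mul_inv]
    ring
  rw [circleAverage_congr_sphere hsphere, circleAverage_fun_smul, circleAverage_zpow hr]
  simp [sub_eq_zero]

theorem laurentCoeff_of_hasSum {F : ℂ → ℂ} {r : ℝ} (hr : 0 < r) {d : ℤ → ℂ}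
    (hd : Summable fun n => ‖d n‖ * r ^ n)
    (hF : ∀ w ∈ sphere (0 : ℂ) r, HasSum (fun n => d n * w ^ n) (F w)) (m : ℤ) :
    laurentCoeff F r m = d m := by
  have hsum : HasSum (fun n => circleAverage (fun w : ℂ => w ^ (-m) * (d n * w ^ n)) 0 r)
      (laurentCoeff F r m) := by
    simp only [laurentCoeff, circleAverage_def]
    have hzpow (k : ℤ) : Continuous fun θ => circleMap 0 r θ ^ k :=
      (continuous_circleMap 0 r).zpow₀ k fun _ => .inl (circleMap_ne_center hr.ne')
    refine (intervalIntegral.hasSum_integral_of_dominated_convergence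
      (fun n _ => r ^ (-m) * (‖d n‖ * r ^ n))
      (fun n => ((hzpow _).mul (continuous_const.mul (hzpow _))).aestronglyMeasurable)
      (fun n => ae_of_all _ fun θ _ => le_of_eq ?_)
      (ae_of_all _ fun _ _ => hd.mul_left _) intervalIntegrable_const
      (ae_of_all _ fun θ _ => (hF _ ?_).mul_left _)).const_smul _
    · simp [norm_circleMap_zero, abs_of_pos hr]
    · exact circleMap_mem_sphere 0 hr.le θ
  simp only [circleAverage_mul_zpow hr] at hsum
  simpa using hsum.unique (hasSum_single m fun n hn => if_neg hn)

theorem M2sq_le_of_hasSum {F : ℂ → ℂ} {r C : ℝ} (hr : 0 < r) (hF : ContinuousOn F (sphere 0 r))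
    {d : ℤ → ℂ} (hd : Summable fun n => ‖d n‖ * r ^ n)
    (hFd : ∀ w ∈ sphere (0 : ℂ) r, HasSum (fun n => d n * w ^ n) (F w))
    (hC : ∀ S : Finset ℤ, ∑ n ∈ S, (‖d n‖ * r ^ n) ^ 2 ≤ C) : M2sq F r ≤ C :=
  hasSum_le_of_sum_le (by simpa only [laurentCoeff_of_hasSum hr hd hFd]
    using hasSum_sq_laurentCoeff hr hF) hC

theorem laurentCoeff_eq_of_differentiableOn {F : ℂ → ℂ} {r R : ℝ} (hr : 0 < r) (hrR : r ≤ R)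
    (hF : DifferentiableOn ℂ F (closedBall 0 R \ ball 0 r)) :
    laurentCoeff F R = laurentCoeff F r := by
  ext n
  have hne : ∀ w ∈ closedBall (0 : ℂ) R \ ball 0 r, w ≠ 0 := fun w hw h =>
    hw.2 (h ▸ mem_ball_self hr)
  have hG : DifferentiableOn ℂ (fun w => (w - 0)⁻¹ • (w ^ (-n) * F w))
      (closedBall 0 R \ ball 0 r) :=
    ((differentiableOn_id.sub_const 0).inv (by simpa using hne)).smul
      ((differentiableOn_id.zpow (.inl hne)).mul hF)
  simp only [laurentCoeff, circleAverage_eq_circleIntegral (hr.trans_le hrR).ne',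
    circleAverage_eq_circleIntegral hr.ne']
  congr 1
  refine circleIntegral_eq_of_differentiable_on_annulus_off_countable hr hrR countable_empty
    hG.continuousOn fun z hz => hG.differentiableAt ?_
  exact mem_of_superset ((isOpen_ball.sdiff isClosed_closedBall).mem_nhds hz.1)
    (sdiff_subset_sdiff ball_subset_closedBall ball_subset_closedBall)

theorem le_radius_ofScalars {c : ℕ → ℂ} {a b K : ℝ} (hab : a < b)
    (hK : ∀ ρ ∈ Ioo a b, ∀ n, ‖c n‖ * ρ ^ n ≤ K) :
    ENNReal.ofReal b ≤ (ofScalars ℂ c).radius := by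
  refine ENNReal.le_of_forall_nnreal_lt fun r hr => le_radius_of_bound _ K fun n => ?_
  have hrb : (r : ℝ) < b := by
    simpa using (ENNReal.lt_ofReal_iff_toReal_lt ENNReal.coe_ne_top).mp hr
  have hρ : max (r : ℝ) ((a + b) / 2) ∈ Ioo a b :=
    ⟨lt_max_of_lt_right (by linarith), max_lt hrb (by linarith)⟩
  rw [ofScalars_norm]
  exact (mul_le_mul_of_nonneg_left (pow_le_pow_left₀ r.coe_nonneg (le_max_left _ _) n)
    (norm_nonneg _)).trans (hK _ hρ n)

lemma mem_eball_zero_of_norm_lt {z : ℂ} {b : ℝ} {R : ENNReal} (hbR : ENNReal.ofReal b ≤ R)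
    (hz : ‖z‖ < b) : z ∈ eball 0 R := by
  rw [mem_eball_zero_iff, ← ofReal_norm]
  exact ((ENNReal.ofReal_lt_ofReal_iff ((norm_nonneg z).trans_lt hz)).mpr hz).trans_le hbR

def regularPart (c : ℤ → ℂ) : ℂ → ℂ :=
  (ofScalars ℂ fun n : ℕ => c n).sum

section RegularPart

variable {c : ℤ → ℂ} {a b K : ℝ}

lemma le_radius_regularPart (hab : a < b) (hK : ∀ ρ ∈ Ioo a b, ∀ n : ℤ, ‖c n‖ * ρ ^ n ≤ K) :
    ENNReal.ofReal b ≤ (ofScalars ℂ fun n : ℕ => c n).radius :=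
  le_radius_ofScalars hab fun ρ hρ n => by simpa using hK ρ hρ n

theorem analyticOnNhd_regularPart (hab : a < b)
    (hK : ∀ ρ ∈ Ioo a b, ∀ n : ℤ, ‖c n‖ * ρ ^ n ≤ K) :
    AnalyticOnNhd ℂ (regularPart c) {z | ‖z‖ < b} := fun z hz => by
  have hz := mem_eball_zero_of_norm_lt (le_radius_regularPart hab hK) hz
  exact ((ofScalars ℂ fun n : ℕ => c n).hasFPowerSeriesOnBall
    (pos_of_gt (mem_eball_zero_iff.mp hz))).analyticAt_of_mem hz

theorem hasSum_regularPart (hab : a < b) (hK : ∀ ρ ∈ Ioo a b, ∀ n : ℤ, ‖c n‖ * ρ ^ n ≤ K)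
    {z : ℂ} (hz : ‖z‖ < b) :
    HasSum (fun n => (Ici 0).indicator c n * z ^ n) (regularPart c z) := by
  have h := (ofScalars ℂ fun n : ℕ => c n).hasSum
    (mem_eball_zero_of_norm_lt (le_radius_regularPart hab hK) hz)
  rw [← Nat.cast_injective.hasSum_iff]
  · simpa [regularPart, Function.comp_def, ofScalars_apply_eq, mul_comm] using h
  · intro n hn
    simp_all

theorem summable_regularPart (hab : a < b) (hK : ∀ ρ ∈ Ioo a b, ∀ n : ℤ, ‖c n‖ * ρ ^ n ≤ K)
    {r : ℝ} (hr : 0 ≤ r) (hrb : r < b) :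
    Summable fun n => ‖(Ici 0).indicator c n‖ * r ^ n := by
  have hrb' : ‖(r : ℂ)‖ < b := by rwa [Complex.norm_of_nonneg hr]
  have h := (ofScalars ℂ fun n : ℕ => c n).summable_norm_apply
    (mem_eball_zero_of_norm_lt (le_radius_regularPart hab hK) hrb')
  rw [← Nat.cast_injective.summable_iff]
  · simpa [Function.comp_def, ofScalars_apply_eq, Complex.norm_of_nonneg hr, abs_of_nonneg hr,
      mul_comm] using h
  · intro n hn
    simp_all

end RegularPart

lemma indicator_Ici_indicator_Iio_neg {M : Type*} [Zero M] (c : ℤ → M) (n : ℤ) :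
    (Ici 0).indicator (fun m => (Iio 0).indicator c (-m)) n = (Iio 0).indicator c (-n) := by
  by_cases hn : 0 ≤ n
  · simp [hn]
  · rw [indicator_of_notMem (by simpa using hn),
      indicator_of_notMem (by simp only [mem_Iio]; omega)]

/-- `∑_{n < 0} c n z ^ n`, as the regular part of the reflected sequence evaluated at `z⁻¹`. -/
def principalPart (c : ℤ → ℂ) (z : ℂ) : ℂ :=
  regularPart (fun n => (Iio 0).indicator c (-n)) z⁻¹

section PrincipalPart

variable {c : ℤ → ℂ} {a b K : ℝ}

lemma norm_indicator_Iio_neg_mul_zpow_le (ha : 0 < a) (hab : a < b)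
    (hK : ∀ ρ ∈ Ioo a b, ∀ n : ℤ, ‖c n‖ * ρ ^ n ≤ K) :
    ∀ s ∈ Ioo b⁻¹ a⁻¹, ∀ n : ℤ, ‖(Iio 0).indicator c (-n)‖ * s ^ n ≤ K := by
  intro s ⟨hbs, hsa⟩ n
  have hs : 0 < s := (inv_pos.mpr (ha.trans hab)).trans hbs
  calc ‖(Iio 0).indicator c (-n)‖ * s ^ n ≤ ‖c (-n)‖ * s⁻¹ ^ (-n) := by
        rw [inv_zpow', neg_neg]
        exact mul_le_mul_of_nonneg_right (norm_indicator_le_norm_self _ _) (zpow_nonneg hs.le _)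
    _ ≤ K := hK _ ⟨(lt_inv_comm₀ ha hs).mpr hsa, (inv_lt_comm₀ hs (ha.trans hab)).mpr hbs⟩ _

lemma norm_inv_lt_inv_of_lt_norm {a : ℝ} (ha : 0 < a) {z : ℂ} (hz : a < ‖z‖) : ‖z⁻¹‖ < a⁻¹ := by
  rw [norm_inv]
  exact inv_strictAnti₀ ha hz

theorem analyticOnNhd_principalPart (ha : 0 < a) (hab : a < b)
    (hK : ∀ ρ ∈ Ioo a b, ∀ n : ℤ, ‖c n‖ * ρ ^ n ≤ K) :
    AnalyticOnNhd ℂ (principalPart c) {z | a < ‖z‖} := fun z hz => by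
  have hz0 : z ≠ 0 := norm_pos_iff.mp (ha.trans hz)
  exact (analyticOnNhd_regularPart (inv_strictAnti₀ ha hab)
    (norm_indicator_Iio_neg_mul_zpow_le ha hab hK) _
    (norm_inv_lt_inv_of_lt_norm ha hz)).comp (analyticAt_inv hz0)

theorem hasSum_principalPart (ha : 0 < a) (hab : a < b)
    (hK : ∀ ρ ∈ Ioo a b, ∀ n : ℤ, ‖c n‖ * ρ ^ n ≤ K) {z : ℂ} (hz : a < ‖z‖) :
    HasSum (fun n => (Iio 0).indicator c n * z ^ n) (principalPart c z) := by
  have h := hasSum_regularPart (inv_strictAnti₀ ha hab)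
    (norm_indicator_Iio_neg_mul_zpow_le ha hab hK)
    (norm_inv_lt_inv_of_lt_norm ha hz)
  rw [principalPart, ← (Equiv.neg ℤ).hasSum_iff]
  convert h using 2 with n
  simp [indicator_Ici_indicator_Iio_neg, inv_zpow']

theorem summable_principalPart (ha : 0 < a) (hab : a < b)
    (hK : ∀ ρ ∈ Ioo a b, ∀ n : ℤ, ‖c n‖ * ρ ^ n ≤ K) {r : ℝ} (hr : a < r) :
    Summable fun n => ‖(Iio 0).indicator c n‖ * r ^ n := by
  have h := summable_regularPart (inv_strictAnti₀ ha hab)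
    (norm_indicator_Iio_neg_mul_zpow_le ha hab hK)
    (inv_nonneg.mpr (ha.trans hr).le) (inv_strictAnti₀ ha hr)
  rw [← (Equiv.neg ℤ).summable_iff]
  convert h using 2 with n
  simp [indicator_Ici_indicator_Iio_neg, inv_zpow']

end PrincipalPart

lemma sum_sq_indicator_le {c : ℤ → ℂ} {s : Set ℤ} {r ρ : ℝ} (hr : 0 ≤ r) (hρ : 0 ≤ ρ)
    (h : ∀ n ∈ s, r ^ n ≤ ρ ^ n) (S : Finset ℤ) :
    ∑ n ∈ S, (‖s.indicator c n‖ * r ^ n) ^ 2 ≤ ∑ n ∈ S, (‖c n‖ * ρ ^ n) ^ 2 := by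
  refine Finset.sum_le_sum fun n _ => pow_le_pow_left₀ (by positivity) ?_ 2
  by_cases hn : n ∈ s
  · rw [indicator_of_mem hn]
    exact mul_le_mul_of_nonneg_left (h n hn) (norm_nonneg _)
  · rw [indicator_of_notMem hn, norm_zero, zero_mul]
    positivity

lemma norm_mul_zpow_le_sqrt {c : ℤ → ℂ} {a b C : ℝ}
    (hC : ∀ ρ ∈ Ioo a b, ∀ S : Finset ℤ, ∑ n ∈ S, (‖c n‖ * ρ ^ n) ^ 2 ≤ C) :
    ∀ ρ ∈ Ioo a b, ∀ n, ‖c n‖ * ρ ^ n ≤ √C := fun ρ hρ n =>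
  (le_abs_self _).trans (Real.abs_le_sqrt (by simpa using hC ρ hρ {n}))

section Parts

variable {c : ℤ → ℂ} {a b C : ℝ}

theorem M2sq_regularPart_le (hab : a < b)
    (hC : ∀ ρ ∈ Ioo a b, ∀ S : Finset ℤ, ∑ n ∈ S, (‖c n‖ * ρ ^ n) ^ 2 ≤ C) {r : ℝ}
    (hr : r ∈ Ioo 0 b) : M2sq (regularPart c) r ≤ C := by
  have hK := norm_mul_zpow_le_sqrt hC
  have hρ : max r ((a + b) / 2) ∈ Ioo a b :=
    ⟨lt_max_of_lt_right (by linarith), max_lt hr.2 (by linarith)⟩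
  have hsphere : sphere (0 : ℂ) r ⊆ {z | ‖z‖ < b} := fun w hw => by
    simpa [mem_sphere_zero_iff_norm.mp hw] using hr.2
  refine M2sq_le_of_hasSum hr.1 ((analyticOnNhd_regularPart hab hK).continuousOn.mono hsphere)
    (summable_regularPart hab hK hr.1.le hr.2) (fun w hw => hasSum_regularPart hab hK (hsphere hw))
    fun S => (sum_sq_indicator_le hr.1.le (hr.1.le.trans (le_max_left _ _)) (fun n hn =>
      zpow_le_zpow_left₀ hn hr.1.le (le_max_left _ _)) S).trans (hC _ hρ S)

theorem M2sq_principalPart_le (ha : 0 < a) (hab : a < b)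
    (hC : ∀ ρ ∈ Ioo a b, ∀ S : Finset ℤ, ∑ n ∈ S, (‖c n‖ * ρ ^ n) ^ 2 ≤ C) {r : ℝ}
    (hr : a < r) : M2sq (principalPart c) r ≤ C := by
  have hK := norm_mul_zpow_le_sqrt hC
  set ρ := min r ((a + b) / 2)
  have hρ : ρ ∈ Ioo a b := ⟨lt_min hr (by linarith), min_lt_of_right_lt (by linarith)⟩
  have hsphere : sphere (0 : ℂ) r ⊆ {z | a < ‖z‖} := fun w hw => by
    simpa [mem_sphere_zero_iff_norm.mp hw] using hr
  have hzpow : ∀ n ∈ Iio (0 : ℤ), r ^ n ≤ ρ ^ n := fun n hn => by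
    simpa [zpow_neg] using inv_anti₀ (zpow_pos (ha.trans hρ.1) (-n))
      (zpow_le_zpow_left₀ (by simp at hn; omega) (ha.trans hρ.1).le (min_le_left r _))
  refine M2sq_le_of_hasSum (ha.trans hr)
    ((analyticOnNhd_principalPart ha hab hK).continuousOn.mono hsphere)
    (summable_principalPart ha hab hK hr) (fun w hw => hasSum_principalPart ha hab hK (hsphere hw))
    fun S => (sum_sq_indicator_le (ha.trans hr).le (ha.trans hρ.1).le hzpow S).trans (hC _ hρ S)

end Parts

lemma sphere_subset_cAnnulus {a b ρ : ℝ} (hρ : ρ ∈ Ioo a b) : sphere (0 : ℂ) ρ ⊆ cAnnulus a b :=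
  fun w hw => by
    rw [mem_sphere_zero_iff_norm] at hw
    exact ⟨hw ▸ hρ.1, hw ▸ hρ.2⟩

theorem laurentCoeff_eq_of_mem_Ioo {f : ℂ → ℂ} {a b r R : ℝ} (ha : 0 < a)
    (hf : DifferentiableOn ℂ f (cAnnulus a b)) (hr : r ∈ Ioo a b) (hR : R ∈ Ioo a b) :
    laurentCoeff f r = laurentCoeff f R := by
  wlog hrR : r ≤ R generalizing r R
  · exact (this hR hr (le_of_not_ge hrR)).symm
  refine (laurentCoeff_eq_of_differentiableOn (ha.trans hr.1) hrR (hf.mono fun w hw => ?_)).symm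
  simp only [Set.mem_sdiff, mem_closedBall, mem_ball, dist_zero_right, not_lt] at hw
  exact ⟨hr.1.trans_le hw.2, hw.1.trans_lt hR.2⟩

theorem eq_regularPart_add_principalPart {c : ℤ → ℂ} {a b K : ℝ} (ha : 0 < a) (hab : a < b)
    {f : ℂ → ℂ} (hf : ContinuousOn f (cAnnulus a b))
    (hfc : ∀ ρ ∈ Ioo a b, laurentCoeff f ρ = c) (hK : ∀ ρ ∈ Ioo a b, ∀ n, ‖c n‖ * ρ ^ n ≤ K)
    {z : ℂ} (hz : z ∈ cAnnulus a b) : f z = regularPart c z + principalPart c z := by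
  have hρ : ‖z‖ ∈ Ioo a b := hz
  have hρ0 : 0 < ‖z‖ := ha.trans hρ.1
  have hsub := sphere_subset_cAnnulus hρ
  have hfρ := hf.mono hsub
  have hg : ContinuousOn (regularPart c) (sphere 0 ‖z‖) :=
    (analyticOnNhd_regularPart hab hK).continuousOn.mono fun w hw => (hsub hw).2
  have hh : ContinuousOn (principalPart c) (sphere 0 ‖z‖) :=
    (analyticOnNhd_principalPart ha hab hK).continuousOn.mono fun w hw => (hsub hw).1
  have hcg : laurentCoeff (regularPart c) ‖z‖ = (Ici 0).indicator c :=
    funext <| laurentCoeff_of_hasSum hρ0 (summable_regularPart hab hK hρ0.le hρ.2)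
      fun w hw => hasSum_regularPart hab hK (hsub hw).2
  have hch : laurentCoeff (principalPart c) ‖z‖ = (Iio 0).indicator c :=
    funext <| laurentCoeff_of_hasSum hρ0 (summable_principalPart ha hab hK hρ.1)
      fun w hw => hasSum_principalPart ha hab hK (hsub hw).1
  have hdiff : EqOn (f - regularPart c) (principalPart c) (sphere 0 ‖z‖) := by
    refine eqOn_of_laurentCoeff_eq hρ0 (hfρ.sub hg) hh (funext fun n => ?_)
    rw [laurentCoeff_sub hρ0 hfρ hg, hfc _ hρ, hcg, hch, ← compl_Ici, indicator_compl]
    rfl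
  have := hdiff (mem_sphere_zero_iff_norm.mpr rfl)
  simp only [Pi.sub_apply] at this
  linear_combination this

/-- Every `f ∈ H²(A_{a,b})` decomposes as `f = g + h` with
`g ∈ H²(D_b)` and `h ∈ H²(ℂ \ closure D_a)`. -/
theorem hardy_annulus_decomposition (a b : ℝ) (ha : 0 < a) (hab : a < b)
    (f : ℂ → ℂ) (hf : MemH2 a b f) :
    ∃ g h : ℂ → ℂ,
      AnalyticOnNhd ℂ g {z : ℂ | ‖z‖ < b} ∧
      (∃ C : ℝ, ∀ r ∈ Set.Ioo (0:ℝ) b, M2sq g r ≤ C) ∧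
      AnalyticOnNhd ℂ h {z : ℂ | a < ‖z‖} ∧
      (∃ C : ℝ, ∀ r ∈ Set.Ioi a, M2sq h r ≤ C) ∧
      (∀ z ∈ cAnnulus a b, f z = g z + h z) := by
  obtain ⟨hfa, C, hC⟩ := hf
  have hmid : (a + b) / 2 ∈ Ioo a b := ⟨by linarith, by linarith⟩
  set c := laurentCoeff f ((a + b) / 2)
  have hfc : ∀ ρ ∈ Ioo a b, laurentCoeff f ρ = c := fun ρ hρ =>
    laurentCoeff_eq_of_mem_Ioo ha hfa.differentiableOn hρ hmid
  have hbessel : ∀ ρ ∈ Ioo a b, ∀ S : Finset ℤ, ∑ n ∈ S, (‖c n‖ * ρ ^ n) ^ 2 ≤ C :=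
    fun ρ hρ S => hfc ρ hρ ▸ (sum_le_hasSum S (fun _ _ => by positivity)
      (hasSum_sq_laurentCoeff (ha.trans hρ.1)
        (hfa.continuousOn.mono (sphere_subset_cAnnulus hρ)))).trans (hC ρ hρ)
  have hK := norm_mul_zpow_le_sqrt hbessel
  exact ⟨regularPart c, principalPart c, analyticOnNhd_regularPart hab hK,
    ⟨C, fun r hr => M2sq_regularPart_le hab hbessel hr⟩, analyticOnNhd_principalPart ha hab hK,
    ⟨C, fun r hr => M2sq_principalPart_le ha hab hbessel hr⟩,
    fun z hz => eq_regularPart_add_principalPart ha hab hfa.continuousOn hfc hK hz⟩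
end
end

section
/- Let 0 < a < b and d ≥ 2. For every ε > 0 with ε ≤ (b − a)/3 there exists a constant C_ε > 0, independent of k, such that for all integers k ≥ 0 and all z, τ ∈ ℂ with a + ε < |z| < b − ε and (|τ| = a or |τ| = b), one has |K_k(z,τ)| ≤ C_ε. -/
open MeasureTheory Complex Filter Set

noncomputable section

/-- The kernel `K_k¹(z,τ) = Σ_{j≥0} (z/τ)^{k+2j}`. -/
def K1 (k : ℕ) (z τ : ℂ) : ℂ := ∑' j : ℕ, (z / τ) ^ (k + 2 * j)

/-- The kernel `K_k²(z,τ) = Σ_{j≥0, -d-k+2+2j ≥ 0} (z/τ)^{-d-k+2+2j}`. -/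
def K2 (d k : ℕ) (z τ : ℂ) : ℂ :=
  ∑' j : ℕ, if 0 ≤ 2 + 2 * (j : ℤ) - d - k then (z / τ) ^ (2 + 2 * (j : ℤ) - d - k) else 0

/-- The kernel `K_k³(z,τ) = Σ_{j≥0, -d-k+2+2j < 0} (z/τ)^{-d-k+2+2j}` (a finite sum). -/
def K3 (d k : ℕ) (z τ : ℂ) : ℂ :=
  ∑' j : ℕ, if 2 + 2 * (j : ℤ) - d - k < 0 then (z / τ) ^ (2 + 2 * (j : ℤ) - d - k) else 0

/-- The Cauchy type kernel for the annulus: `K_k = K_k¹ + K_k²` on `|τ| = b` and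
`K_k = K_k³` on `|τ| = a`. -/
def Kk (d k : ℕ) (b : ℝ) (z τ : ℂ) : ℂ :=
  if ‖τ‖ = b then K1 k z τ + K2 d k z τ else K3 d k z τ

/-!
Put `w = z/τ`. On the outer circle `‖w‖ ≤ (b - ε)/b < 1`, and `K_k¹`, `K_k²` are sums of powers
`w^n` over pairwise distinct exponents `n ≥ 0`; on the inner circle `‖w⁻¹‖ ≤ a/(a + ε) < 1`, and
`K_k³` is a sum of powers `(w⁻¹)^n` over pairwise distinct `n > 0`. A sum of powers of `u` with
distinct exponents is dominated by the full geometric series, so `‖u‖ ≤ q < 1` bounds it by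
`(1 - q)⁻¹`, whatever `k` is.
-/

section DistinctPowers

variable {𝕜 : Type*} [NormedDivisionRing 𝕜] {u : 𝕜} {q : ℝ}

theorem norm_tsum_pow_le_of_injective {ι : Type*} (hu : ‖u‖ ≤ q) (hq : q < 1)
    {e : ι → ℕ} (he : Function.Injective e) : ‖∑' i, u ^ e i‖ ≤ (1 - q)⁻¹ := by
  have hq0 : 0 ≤ q := (norm_nonneg u).trans hu
  have hgeom := summable_geometric_of_lt_one hq0 hq
  calc ‖∑' i, u ^ e i‖ ≤ ∑' i, q ^ e i :=
        tsum_of_norm_bounded (hgeom.comp_injective he).hasSum fun i => by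
          rw [norm_pow]; exact pow_le_pow_left₀ (norm_nonneg u) hu _
    _ ≤ ∑' n, q ^ n := tsum_comp_le_tsum_of_inj hgeom (fun n => pow_nonneg hq0 n) he
    _ = (1 - q)⁻¹ := tsum_geometric_of_lt_one hq0 hq

theorem norm_tsum_ite_zpow_le_of_injOn (hu : ‖u‖ ≤ q) (hq : q < 1)
    {P : ℕ → Prop} [DecidablePred P] {n : ℕ → ℤ} (hn : Set.InjOn n {j | P j})
    (hn0 : ∀ j, P j → 0 ≤ n j) :
    ‖∑' j, if P j then u ^ n j else 0‖ ≤ (1 - q)⁻¹ := by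
  have hind : (fun j => if P j then u ^ n j else 0)
      = {j | P j}.indicator fun j => u ^ (n j).toNat := by
    funext j
    by_cases hj : P j
    · rw [Set.indicator_of_mem (s := {j | P j}) hj, if_pos hj, ← zpow_natCast,
        Int.toNat_of_nonneg (hn0 j hj)]
    · simp [hj]
  rw [hind, ← tsum_subtype]
  refine norm_tsum_pow_le_of_injective hu hq fun i j hij => Subtype.ext (hn i.2 j.2 ?_)
  have := hn0 i i.2; have := hn0 j j.2
  omega

end DistinctPowers

section KernelBounds

variable {z τ : ℂ} {q : ℝ}

theorem norm_K1_le (k : ℕ) (hw : ‖z / τ‖ ≤ q) (hq : q < 1) : ‖K1 k z τ‖ ≤ (1 - q)⁻¹ :=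
  norm_tsum_pow_le_of_injective hw hq fun i j hij => by omega

theorem norm_K2_le (d k : ℕ) (hw : ‖z / τ‖ ≤ q) (hq : q < 1) : ‖K2 d k z τ‖ ≤ (1 - q)⁻¹ :=
  norm_tsum_ite_zpow_le_of_injOn hw hq (fun i _ j _ hij => by omega) fun _ hj => hj

theorem norm_K3_le (d k : ℕ) (hw : ‖(z / τ)⁻¹‖ ≤ q) (hq : q < 1) :
    ‖K3 d k z τ‖ ≤ (1 - q)⁻¹ := by
  have hinv (n : ℤ) : (z / τ) ^ n = (z / τ)⁻¹ ^ (-n) := by rw [inv_zpow', neg_neg]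
  simp_rw [K3, hinv]
  exact norm_tsum_ite_zpow_le_of_injOn hw hq (fun i _ j _ hij => by omega)
    fun _ hj => by omega

end KernelBounds

theorem cauchy_kernel_uniform_bound_general (a b : ℝ) (ha : 0 < a) (hab : a < b)
    (d : ℕ) :
    ∀ ε : ℝ, 0 < ε → ε ≤ (b - a) / 3 →
      ∃ C : ℝ, 0 < C ∧
        ∀ (k : ℕ) (z τ : ℂ), a + ε < ‖z‖ → ‖z‖ < b - ε →
          (‖τ‖ = a ∨ ‖τ‖ = b) →
          ‖Kk d k b z τ‖ ≤ C := by
  intro ε hε _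
  set q := (b - ε) / b
  set p := a / (a + ε)
  have hq : q < 1 := (div_lt_one (by linarith)).2 (by linarith)
  have hp : p < 1 := (div_lt_one (by linarith)).2 (by linarith)
  have hq' : 0 < (1 - q)⁻¹ := inv_pos.2 (sub_pos.2 hq)
  have hp' : 0 < (1 - p)⁻¹ := inv_pos.2 (sub_pos.2 hp)
  refine ⟨2 * (1 - q)⁻¹ + (1 - p)⁻¹, by positivity, ?_⟩
  rintro k z τ hz₁ hz₂ (hτ | hτ)
  · have hw : ‖(z / τ)⁻¹‖ ≤ p := by
      rw [inv_div, norm_div, hτ]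
      exact div_le_div_of_nonneg_left ha.le (by linarith) hz₁.le
    rw [Kk, if_neg (hτ ▸ hab.ne)]
    linarith [norm_K3_le d k hw hp]
  · have hw : ‖z / τ‖ ≤ q := by
      rw [norm_div, hτ]
      exact div_le_div_of_nonneg_right hz₂.le (by linarith)
    rw [Kk, if_pos hτ]
    linarith [norm_add_le (K1 k z τ) (K2 d k z τ), norm_K1_le k hw hq, norm_K2_le d k hw hq]

/-- Uniform boundedness of the Cauchy type kernels: for every
`0 < ε ≤ (b-a)/3` there is a constant `C_ε > 0`, independent of `k`, bounding
`|K_k(z,τ)|` for `a + ε < |z| < b - ε` and `|τ| = a` or `|τ| = b`. -/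
theorem cauchy_kernel_uniform_bound (a b : ℝ) (ha : 0 < a) (hab : a < b)
    (d : ℕ) (hd : 2 ≤ d) :
    ∀ ε : ℝ, 0 < ε → ε ≤ (b - a) / 3 →
      ∃ C : ℝ, 0 < C ∧
        ∀ (k : ℕ) (z τ : ℂ), a + ε < ‖z‖ → ‖z‖ < b - ε →
          (‖τ‖ = a ∨ ‖τ‖ = b) →
          ‖Kk d k b z τ‖ ≤ C :=
  cauchy_kernel_uniform_bound_general a b ha hab d
end
end
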